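/- arXiv:1805.11487 — 6 statements merged into one kernel-verified Lean document; each statement's English description precedes it below -/
import Mathlib

section
/- If E and F are real matrices with the same number of rows τ, then rank([E F]) = rank(E) + rank((I_τ − E E⁺) F), where [E F] denotes the matrix obtained by horizontal concatenation and E⁺ is the Moore–Penrose pseudoinverse of E. -/
/-!
If `A X A = A`, then `P = A X` is an idempotent with `P A = A`. The column space of `[A B]` is
`range A ⊔ range B`, and subtracting `A (X B)` from `B` is a column operation, so it is also
`range A ⊔ range ((1 - P) B)`. This sum is direct: `P` fixes `range A` and kills
`range ((1 - P) B)`. Hence the ranks add.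
-/

open Matrix

def IsMP {m n : Type*} [Fintype m] [Fintype n]
    (E : Matrix m n ℝ) (X : Matrix n m ℝ) : Prop :=
  E * X * E = E ∧ X * E * X = X ∧ (E * X)ᵀ = E * X ∧ (X * E)ᵀ = X * E

namespace Matrix

variable {R K : Type*} [CommRing R] [Field K] {m n p : Type*} [Fintype n] [Fintype p]

theorem range_mulVecLin_fromCols (A : Matrix m n R) (B : Matrix m p R) :
    LinearMap.range (fromCols A B).mulVecLin =
      LinearMap.range A.mulVecLin ⊔ LinearMap.range B.mulVecLin := by
  have hcomp : (fromCols A B).mulVecLin = (A.mulVecLin.coprod B.mulVecLin) ∘ₗ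
      (LinearEquiv.sumArrowLequivProdArrow n p R R).toLinearMap := by
    ext v i
    simp [LinearEquiv.sumArrowLequivProdArrow, Equiv.sumArrowEquivProdArrow]
  rw [hcomp, LinearMap.range_comp_of_range_eq_top _ (LinearEquiv.range _), LinearMap.range_coprod]

theorem range_mulVecLin_le_sup_sub_mul (A : Matrix m n R) (B : Matrix m p R) (C : Matrix n p R) :
    LinearMap.range B.mulVecLin ≤
      LinearMap.range A.mulVecLin ⊔ LinearMap.range (B - A * C).mulVecLin := by
  rintro _ ⟨v, rfl⟩
  have hsplit : B *ᵥ v = A *ᵥ (C *ᵥ v) + (B - A * C) *ᵥ v := by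
    rw [sub_mulVec, mulVec_mulVec, add_sub_cancel]
  rw [mulVecLin_apply, hsplit]
  exact Submodule.add_mem_sup ⟨_, rfl⟩ ⟨_, rfl⟩

theorem range_mulVecLin_sup_sub_mul (A : Matrix m n R) (B : Matrix m p R) (C : Matrix n p R) :
    LinearMap.range A.mulVecLin ⊔ LinearMap.range (B - A * C).mulVecLin =
      LinearMap.range A.mulVecLin ⊔ LinearMap.range B.mulVecLin := by
  refine le_antisymm (sup_le le_sup_left ?_) (sup_le le_sup_left ?_)
  · simpa using range_mulVecLin_le_sup_sub_mul A (B - A * C) (-C)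
  · exact range_mulVecLin_le_sup_sub_mul A B C

theorem disjoint_range_mulVecLin_one_sub_mul [Fintype m] [DecidableEq m] {A : Matrix m n R}
    {X : Matrix n m R} (hX : A * X * A = A) (B : Matrix m p R) :
    Disjoint (LinearMap.range A.mulVecLin) (LinearMap.range ((1 - A * X) * B).mulVecLin) := by
  rw [Submodule.disjoint_def]
  rintro _ ⟨u, rfl⟩ ⟨v, hv⟩
  have hidem : A * X * (A * X) = A * X := by rw [← Matrix.mul_assoc, hX]
  have hkill : (A * X) * ((1 - A * X) * B) = 0 := by
    rw [← Matrix.mul_assoc, Matrix.mul_sub, Matrix.mul_one, hidem, sub_self, Matrix.zero_mul]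
  calc A *ᵥ u = (A * X) *ᵥ (A *ᵥ u) := by rw [mulVec_mulVec, hX]
    _ = (A * X) *ᵥ (((1 - A * X) * B) *ᵥ v) := congrArg _ hv.symm
    _ = 0 := by rw [mulVec_mulVec, hkill, zero_mulVec]

theorem rank_fromCols_of_disjoint [Fintype m] (A : Matrix m n K) (B : Matrix m p K)
    (h : Disjoint (LinearMap.range A.mulVecLin) (LinearMap.range B.mulVecLin)) :
    (fromCols A B).rank = A.rank + B.rank := by
  have hdim := Submodule.finrank_sup_add_finrank_inf_eq (LinearMap.range A.mulVecLin)
    (LinearMap.range B.mulVecLin)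
  rw [h.eq_bot, finrank_bot, add_zero] at hdim
  rw [rank, range_mulVecLin_fromCols, hdim, rank, rank]

theorem rank_fromCols_eq_rank_add_rank_one_sub_mul [Fintype m] [DecidableEq m] {A : Matrix m n K}
    {X : Matrix n m K} (hX : A * X * A = A) (B : Matrix m p K) :
    (fromCols A B).rank = A.rank + ((1 - A * X) * B).rank := by
  have hcol : (1 - A * X) * B = B - A * (X * B) := by
    rw [Matrix.sub_mul, Matrix.one_mul, Matrix.mul_assoc]
  rw [← rank_fromCols_of_disjoint _ _ (disjoint_range_mulVecLin_one_sub_mul hX B), rank, rank,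
    range_mulVecLin_fromCols, range_mulVecLin_fromCols, hcol, range_mulVecLin_sup_sub_mul]

end Matrix

theorem stmt0 {τ μ δ : ℕ} (E : Matrix (Fin τ) (Fin μ) ℝ) (F : Matrix (Fin τ) (Fin δ) ℝ)
    (Ep : Matrix (Fin μ) (Fin τ) ℝ) (hEp : IsMP E Ep) :
    (fromCols E F).rank = E.rank + ((1 - E * Ep) * F).rank :=
  rank_fromCols_eq_rank_add_rank_one_sub_mul hEp.1 F
end

section
/- Let Ā : m × n̄ and W : q × n̄ be real matrices with Ā Wᵀ = 0. Then the Moore–Penrose pseudoinverse of the stacked matrix [Ā; W] (Ā on top of W) equals the horizontal concatenation [Ā⁺ W⁺]. -/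
/-!
The column space of `E⁺` lies in the row space of `E`, since `E⁺ = Eᵀ E⁺ᵀ E⁺`. Hence if the row
spaces of `A` and `W` are orthogonal, the cross products `A W⁺` and `W A⁺` vanish. Then
`[A; W] [A⁺ W⁺]` is block diagonal with blocks `A A⁺`, `W W⁺`, and `[A⁺ W⁺] [A; W] = A⁺ A + W⁺ W`,
from which the four Penrose equations for the stacked matrix follow blockwise.
-/

open Matrix

namespace IsMP

variable {m n p : Type*} [Fintype m] [Fintype n]
  {E : Matrix m n ℝ} {X : Matrix n m ℝ}

theorem eq_transpose_mul_mul (hX : IsMP E X) : X = Eᵀ * Xᵀ * X :=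
  calc X = X * E * X := hX.2.1.symm
    _ = (X * E)ᵀ * X := by rw [hX.2.2.2]
    _ = Eᵀ * Xᵀ * X := by rw [transpose_mul]

theorem mul_eq_zero_of_mul_transpose_eq_zero (hX : IsMP E X) {B : Matrix p n ℝ}
    (hB : B * Eᵀ = 0) : B * X = 0 := by
  rw [hX.eq_transpose_mul_mul, ← Matrix.mul_assoc, ← Matrix.mul_assoc, hB,
    Matrix.zero_mul, Matrix.zero_mul]

variable {m' : Type*} [Fintype m'] {F : Matrix m' n ℝ} {Y : Matrix n m' ℝ}

theorem fromRows (hX : IsMP E X) (hY : IsMP F Y) (hEF : E * Fᵀ = 0) :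
    IsMP (Matrix.fromRows E F) (fromCols X Y) := by
  have hEY : E * Y = 0 := hY.mul_eq_zero_of_mul_transpose_eq_zero hEF
  have hFX : F * X = 0 := hX.mul_eq_zero_of_mul_transpose_eq_zero <| by
    rw [← transpose_transpose F, ← transpose_mul, hEF, transpose_zero]
  obtain ⟨hX₁, hX₂, hX₃, hX₄⟩ := hX
  obtain ⟨hY₁, hY₂, hY₃, hY₄⟩ := hY
  have hLeft : Matrix.fromRows E F * fromCols X Y = fromBlocks (E * X) 0 0 (F * Y) := by
    rw [fromRows_mul_fromCols, hEY, hFX]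
  have hRight : fromCols X Y * Matrix.fromRows E F = X * E + Y * F :=
    fromCols_mul_fromRows _ _ _ _
  refine ⟨?_, ?_, ?_, ?_⟩
  · rw [hLeft, fromBlocks_mul_fromRows, Matrix.zero_mul, Matrix.zero_mul, add_zero, zero_add,
      hX₁, hY₁]
  · rw [hRight, mul_fromCols, Matrix.add_mul, Matrix.add_mul, Matrix.mul_assoc Y F X, hFX,
      Matrix.mul_assoc X E Y, hEY, Matrix.mul_zero, Matrix.mul_zero, add_zero, zero_add, hX₂, hY₂]
  · rw [hLeft, fromBlocks_transpose, hX₃, hY₃, transpose_zero, transpose_zero]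
  · rw [hRight, transpose_add, hX₄, hY₄]

end IsMP

theorem stmt4 {m q nb : ℕ} (Abar : Matrix (Fin m) (Fin nb) ℝ) (W : Matrix (Fin q) (Fin nb) ℝ)
    (h : Abar * Wᵀ = 0)
    (Abp : Matrix (Fin nb) (Fin m) ℝ) (hAbp : IsMP Abar Abp)
    (Wp : Matrix (Fin nb) (Fin q) ℝ) (hWp : IsMP W Wp) :
    IsMP (fromRows Abar W) (fromCols Abp Wp) :=
  hAbp.fromRows hWp h
end

section
/- Let A : m × n with m ≤ n have full row rank, Γ : m × q, Ā = [A Γ], P = Āᵀ(Ā Āᵀ)⁻¹ Ā (well defined since Ā has full row rank), Y = [0 I_q], and S = Y(I − P)Yᵀ. Then S is invertible. -/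
open Matrix

/-!
With `Q = 1 - P` symmetric and idempotent, `S = (Y Q) (Y Q)ᵀ`, so `S` is positive definite as
soon as `x ↦ xᵀ Y Q` is injective. If `xᵀ Y Q = 0`, then `xᵀ Y = (0, xᵀ)` is fixed by `P`, hence
lies in the row space of `Ā`: `(0, xᵀ) = (wᵀ A, wᵀ Γ)` for some `w`. Full row rank of `A` forces
`w = 0`, and then `x = Γᵀ w = 0`.
-/

namespace Matrix

variable {K : Type*} [Field K] {m n k q : Type*} [Fintype m]

theorem vecMul_injective_of_rank_eq_card [Fintype n] {A : Matrix m n K}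
    (hA : A.rank = Fintype.card m) : Function.Injective A.vecMul := by
  rw [vecMul_injective_iff, linearIndependent_iff_card_eq_finrank_span, Set.finrank,
    ← rank_eq_finrank_span_row, hA]

theorem vecMul_fromCols_injective {A : Matrix m n K} (hA : Function.Injective A.vecMul)
    (G : Matrix m q K) : Function.Injective (fromCols A G).vecMul :=
  fun v w (hvw : v ᵥ* fromCols A G = w ᵥ* fromCols A G) => by
    rw [vecMul_fromCols, vecMul_fromCols] at hvw
    exact hA (funext fun i => congrFun hvw (Sum.inl i))

section RowSpaceProj

variable [DecidableEq m] [Fintype k]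

noncomputable def rowSpaceProj (B : Matrix m k K) : Matrix k k K := Bᵀ * (B * Bᵀ)⁻¹ * B

theorem transpose_rowSpaceProj (B : Matrix m k K) : (rowSpaceProj B)ᵀ = rowSpaceProj B := by
  simp only [rowSpaceProj, transpose_mul, transpose_transpose, transpose_nonsing_inv,
    Matrix.mul_assoc]

theorem isIdempotentElem_rowSpaceProj {B : Matrix m k K} (hB : IsUnit (B * Bᵀ).det) :
    IsIdempotentElem (rowSpaceProj B) := by
  calc rowSpaceProj B * rowSpaceProj B
      = Bᵀ * ((B * Bᵀ)⁻¹ * (B * Bᵀ)) * (B * Bᵀ)⁻¹ * B := by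
        simp only [rowSpaceProj, Matrix.mul_assoc]
    _ = rowSpaceProj B := by rw [nonsing_inv_mul _ hB, Matrix.mul_one, rowSpaceProj]

theorem exists_vecMul_eq_of_vecMul_rowSpaceProj {B : Matrix m k K} {v : k → K}
    (hv : v ᵥ* rowSpaceProj B = v) : ∃ w, w ᵥ* B = v :=
  ⟨v ᵥ* (Bᵀ * (B * Bᵀ)⁻¹), by rw [vecMul_vecMul]; exact hv⟩

end RowSpaceProj

theorem vecMul_injective_fromCols_zero_one_mul_one_sub_rowSpaceProj [DecidableEq m]
    [Fintype n] [Fintype q] [DecidableEq n] [DecidableEq q] {A : Matrix m n K}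
    (hA : Function.Injective A.vecMul) (G : Matrix m q K) :
    Function.Injective (fromCols (0 : Matrix q n K) (1 : Matrix q q K) *
      (1 - rowSpaceProj (fromCols A G))).vecMul := by
  rw [← coe_vecMulLinear, injective_iff_map_eq_zero]
  intro x hx
  rw [vecMulLinear_apply, ← vecMul_vecMul, vecMul_sub, vecMul_one, sub_eq_zero] at hx
  obtain ⟨w, hw⟩ := exists_vecMul_eq_of_vecMul_rowSpaceProj hx.symm
  rw [vecMul_fromCols, vecMul_fromCols, vecMul_zero, vecMul_one] at hw
  have hw0 : w = 0 := hA ((funext fun i => congrFun hw (Sum.inl i)).trans (zero_vecMul A).symm)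
  calc x = w ᵥ* G := (funext fun j => congrFun hw (Sum.inr j)).symm
    _ = 0 := by rw [hw0, zero_vecMul]

theorem posDef_mul_mul_transpose_of_isIdempotentElem [Fintype n] {Q : Matrix n n ℝ}
    (hQt : Qᵀ = Q) (hQ : IsIdempotentElem Q) {Y : Matrix m n ℝ}
    (hY : Function.Injective (Y * Q).vecMul) : (Y * Q * Yᵀ).PosDef := by
  have hfac : Y * Q * Yᵀ = Y * Q * (Y * Q)ᴴ := by
    rw [conjTranspose_eq_transpose_of_trivial, transpose_mul, hQt, ← Matrix.mul_assoc,
      Matrix.mul_assoc Y Q Q, hQ.eq]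
  rw [hfac]
  exact PosDef.mul_conjTranspose_self _ hY

end Matrix

theorem stmt7_general {m n q : ℕ} (A : Matrix (Fin m) (Fin n) ℝ) (hA : A.rank = m)
    (G : Matrix (Fin m) (Fin q) ℝ) :
    let Abar := fromCols A G
    let P := Abarᵀ * (Abar * Abarᵀ)⁻¹ * Abar
    let Y : Matrix (Fin q) (Fin n ⊕ Fin q) ℝ := fromCols 0 1
    IsUnit (Y * (1 - P) * Yᵀ) := by
  intro Abar P Y
  have hAinj : Function.Injective A.vecMul :=
    vecMul_injective_of_rank_eq_card (by simpa using hA)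
  have hdet : IsUnit (Abar * Abarᵀ).det := by
    rw [← isUnit_iff_isUnit_det, ← conjTranspose_eq_transpose_of_trivial]
    exact (PosDef.mul_conjTranspose_self _ (vecMul_fromCols_injective hAinj G)).isUnit
  have hsymm : (1 - P)ᵀ = 1 - P := by
    rw [transpose_sub, transpose_one]
    exact congrArg (1 - ·) (transpose_rowSpaceProj Abar)
  exact (posDef_mul_mul_transpose_of_isIdempotentElem hsymm
    (isIdempotentElem_rowSpaceProj hdet).one_sub
    (vecMul_injective_fromCols_zero_one_mul_one_sub_rowSpaceProj hAinj G)).isUnit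

theorem stmt7 {m n q : ℕ} (hmn : m ≤ n) (A : Matrix (Fin m) (Fin n) ℝ) (hA : A.rank = m)
    (G : Matrix (Fin m) (Fin q) ℝ) :
    let Abar := fromCols A G
    let P := Abarᵀ * (Abar * Abarᵀ)⁻¹ * Abar
    let Y : Matrix (Fin q) (Fin n ⊕ Fin q) ℝ := fromCols 0 1
    IsUnit (Y * (1 - P) * Yᵀ) :=
  stmt7_general A hA G
end

section
/- Let Ā : m × n̄ be real, Y = [0 I_q] : q × n̄, P = Ā⁺Ā, and W = Y(I − P). Then rank(W) = q − dim(range(Yᵀ) ∩ range(Āᵀ)). -/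
open Matrix

/-!
Transposing, `rank W = rank ((I - P) Yᵀ)`, and `I - P` restricted to `range Yᵀ` has kernel
`range Yᵀ ∩ ker (I - P) = range Yᵀ ∩ range Āᵀ`. Rank–nullity for this restriction, together with
`rank Yᵀ = q` (as `Y Yᵀ = I`), gives the formula.
-/

theorem LinearMap.finrank_map_add_finrank_inf_ker {K V V₂ : Type*} [DivisionRing K]
    [AddCommGroup V] [Module K V] [AddCommGroup V₂] [Module K V₂] [FiniteDimensional K V]
    (f : V →ₗ[K] V₂) (p : Submodule K V) :
    Module.finrank K (p.map f) + Module.finrank K ↥(p ⊓ LinearMap.ker f) =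
      Module.finrank K p := by
  have hker : LinearMap.ker (f.domRestrict p) ≃ₗ[K] ↥(p ⊓ LinearMap.ker f) := by
    have : (p ⊓ LinearMap.ker f).comap p.subtype = (LinearMap.ker f).comap p.subtype := by
      rw [Submodule.comap_inf, Submodule.comap_subtype_self, top_inf_eq]
    rw [LinearMap.ker_domRestrict, ← this]
    exact Submodule.comapSubtypeEquivOfLe inf_le_left
  rw [← hker.finrank_eq, ← LinearMap.range_domRestrict]
  exact (f.domRestrict p).finrank_range_add_finrank_ker

namespace Matrix

theorem rank_mul_add_finrank_inf_ker {K m n o : Type*} [Field K] [Fintype n] [Fintype o]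
    (A : Matrix m n K) (B : Matrix n o K) :
    (A * B).rank + Module.finrank K
        ↥(LinearMap.range B.mulVecLin ⊓ LinearMap.ker A.mulVecLin) = B.rank := by
  rw [rank, rank, mulVecLin_mul, LinearMap.range_comp]
  exact A.mulVecLin.finrank_map_add_finrank_inf_ker _

theorem rank_eq_card_of_mul_eq_one {K m n : Type*} [Field K] [Fintype m] [Fintype n]
    [DecidableEq m] {A : Matrix m n K} {B : Matrix n m K} (h : A * B = 1) :
    B.rank = Fintype.card m :=
  le_antisymm B.rank_le_card_width (by simpa [h] using A.rank_mul_le_right B)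

theorem fromCols_zero_one_mul_transpose {R ι m : Type*} [Semiring R] [Fintype ι] [Fintype m]
    [DecidableEq m] :
    (fromCols 0 1 : Matrix m (ι ⊕ m) R) * (fromCols 0 1 : Matrix m (ι ⊕ m) R)ᵀ = 1 := by
  simp [transpose_fromCols, fromCols_mul_fromRows]

end Matrix

namespace IsMP

variable {m n : Type*} [Fintype m] [Fintype n] {E : Matrix m n ℝ} {X : Matrix n m ℝ}

theorem mul_mul_transpose (h : IsMP E X) : X * E * Eᵀ = Eᵀ := by
  obtain ⟨hEXE, -, -, hXE⟩ := h
  rw [← hXE, ← transpose_mul, ← Matrix.mul_assoc, hEXE]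

theorem transpose_mul_transpose (h : IsMP E X) : Eᵀ * Xᵀ = X * E := by
  rw [← transpose_mul, h.2.2.2]

theorem ker_one_sub_mul_mulVecLin [DecidableEq n] (h : IsMP E X) :
    LinearMap.ker (1 - X * E).mulVecLin = LinearMap.range Eᵀ.mulVecLin := by
  ext v
  simp only [LinearMap.mem_ker, LinearMap.mem_range, mulVecLin_apply, sub_mulVec, one_mulVec,
    sub_eq_zero]
  constructor
  · intro hv
    exact ⟨Xᵀ *ᵥ v, by rw [mulVec_mulVec, h.transpose_mul_transpose, ← hv]⟩
  · rintro ⟨w, rfl⟩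
    rw [mulVec_mulVec, h.mul_mul_transpose]

end IsMP

theorem stmt8 {m n q : ℕ} (Abar : Matrix (Fin m) (Fin n ⊕ Fin q) ℝ)
    (Abp : Matrix (Fin n ⊕ Fin q) (Fin m) ℝ) (hAbp : IsMP Abar Abp) :
    let Y : Matrix (Fin q) (Fin n ⊕ Fin q) ℝ := fromCols 0 1
    (Y * (1 - Abp * Abar)).rank =
      q - Module.finrank ℝ
        ↥(LinearMap.range Yᵀ.mulVecLin ⊓ LinearMap.range Abarᵀ.mulVecLin) := by
  intro Y
  have hW : (Y * (1 - Abp * Abar)).rank = ((1 - Abp * Abar) * Yᵀ).rank := by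
    rw [← rank_transpose, transpose_mul, transpose_sub, transpose_one, hAbp.2.2.2]
  have hY : Yᵀ.rank = q := by
    simpa using rank_eq_card_of_mul_eq_one (fromCols_zero_one_mul_transpose (R := ℝ) (ι := Fin n) (m := Fin q))
  have key := rank_mul_add_finrank_inf_ker (1 - Abp * Abar) Yᵀ
  rw [hAbp.ker_one_sub_mul_mulVecLin, hY] at key
  omega
end

section
/- Let B = [B₁ … B_p] with B_iᵀB_j = 0 for i ≠ j. Then the Moore–Penrose pseudoinverse of B is obtained by stacking the pseudoinverses: B⁺ = [B₁⁺; B₂⁺; … ; B_p⁺] (vertical concatenation). -/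
/-
The Penrose equation `Xᵢ = Xᵢ Xᵢᵀ Bᵢᵀ` shows that orthogonality of the column spaces forces
`Xᵢ Bⱼ = 0` for `i ≠ j`. Hence, for `X` the stack of the `Xᵢ = Bᵢ⁺`, the product `X B` is block
diagonal with blocks `Xᵢ Bᵢ`, while `B X = ∑ Bᵢ Xᵢ`; the four Penrose equations for `(B, X)` then
reduce blockwise to those for `(Bᵢ, Xᵢ)`, and the Moore–Penrose inverse is unique.
-/

open Matrix

namespace Matrix

variable {α ι m : Type*} {n o : ι → Type*}

def blockCols (A : ∀ i, Matrix m (n i) α) : Matrix m (Σ i, n i) α :=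
  of fun k ic => A ic.1 k ic.2

def blockRows (X : ∀ i, Matrix (n i) m α) : Matrix (Σ i, n i) m α :=
  of fun ic k => X ic.1 ic.2 k

variable [NonUnitalNonAssocSemiring α]

theorem blockRows_mul_blockCols [DecidableEq ι] [Fintype m] (X : ∀ i, Matrix (n i) m α)
    (A : ∀ i, Matrix m (o i) α) (h : ∀ i j, i ≠ j → X i * A j = 0) :
    blockRows X * blockCols A = blockDiagonal' fun i => X i * A i := by
  ext ⟨i, a⟩ ⟨j, b⟩
  obtain rfl | hij := eq_or_ne i j
  · simp [blockCols, blockRows, mul_apply]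
  · simpa [blockCols, blockRows, mul_apply, blockDiagonal'_apply_ne _ _ _ hij] using
      congr_fun₂ (h i j hij) a b

variable [Fintype ι]

theorem blockCols_mul_blockRows [∀ i, Fintype (n i)] (A : ∀ i, Matrix m (n i) α)
    (X : ∀ i, Matrix (n i) m α) : blockCols A * blockRows X = ∑ i, A i * X i := by
  ext k l
  simp [blockCols, blockRows, mul_apply, Matrix.sum_apply, Fintype.sum_sigma]

theorem blockCols_mul_blockDiagonal' [DecidableEq ι] [∀ i, Fintype (n i)]
    (A : ∀ i, Matrix m (n i) α) (D : ∀ i, Matrix (n i) (o i) α) :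
    blockCols A * blockDiagonal' D = blockCols fun i => A i * D i := by
  ext k ⟨j, b⟩
  simp [blockCols, mul_apply, Fintype.sum_sigma, blockDiagonal'_apply]

theorem blockDiagonal'_mul_blockRows [DecidableEq ι] [∀ i, Fintype (o i)]
    (D : ∀ i, Matrix (n i) (o i) α) (X : ∀ i, Matrix (o i) m α) :
    blockDiagonal' D * blockRows X = blockRows fun i => D i * X i := by
  ext ⟨i, a⟩ k
  simp [blockRows, mul_apply, Fintype.sum_sigma, blockDiagonal'_apply]

end Matrix

namespace IsMP

variable {m n o : Type*} [Fintype m] [Fintype n] {E : Matrix m n ℝ} {X Y : Matrix n m ℝ}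

theorem unique (hX : IsMP E X) (hY : IsMP E Y) : X = Y := by
  obtain ⟨hX1, hX2, hX3, hX4⟩ := hX
  obtain ⟨hY1, hY2, hY3, hY4⟩ := hY
  have hEX : E * X = E * Y := by
    calc E * X = (E * Y * E * X)ᵀ := by rw [hY1, hX3]
      _ = (E * X)ᵀ * (E * Y)ᵀ := by simp only [transpose_mul, Matrix.mul_assoc]
      _ = E * Y := by rw [hX3, hY3, ← Matrix.mul_assoc, hX1]
  have hXE : X * E = Y * E := by
    calc X * E = (X * (E * Y * E))ᵀ := by rw [hY1, hX4]
      _ = (Y * E)ᵀ * (X * E)ᵀ := by simp only [transpose_mul, Matrix.mul_assoc]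
      _ = Y * E := by rw [hX4, hY4, Matrix.mul_assoc, ← Matrix.mul_assoc E, hX1]
  calc X = X * E * X := hX2.symm
    _ = Y * E * Y := by rw [Matrix.mul_assoc, hEX, ← Matrix.mul_assoc, hXE]
    _ = Y := hY2

theorem mul_eq_zero_of_transpose_mul_eq_zero [Fintype o] {F : Matrix m o ℝ} (hX : IsMP E X)
    (hEF : Eᵀ * F = 0) : X * F = 0 := by
  calc X * F = X * (E * X)ᵀ * F := by rw [hX.2.2.1, ← Matrix.mul_assoc X E, hX.2.1]
    _ = X * Xᵀ * (Eᵀ * F) := by simp only [transpose_mul, Matrix.mul_assoc]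
    _ = 0 := by rw [hEF, Matrix.mul_zero]

end IsMP

theorem isMP_blockCols_blockRows {ι m : Type*} [Fintype ι] [DecidableEq ι] [Fintype m]
    {n : ι → Type*} [∀ i, Fintype (n i)] {A : ∀ i, Matrix m (n i) ℝ} {X : ∀ i, Matrix (n i) m ℝ}
    (horth : ∀ i j, i ≠ j → (A i)ᵀ * A j = 0) (hX : ∀ i, IsMP (A i) (X i)) :
    IsMP (blockCols A) (blockRows X) := by
  have hXA : blockRows X * blockCols A = blockDiagonal' fun i => X i * A i :=
    blockRows_mul_blockCols X A fun i j hij =>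
      (hX i).mul_eq_zero_of_transpose_mul_eq_zero (horth i j hij)
  refine ⟨?_, ?_, ?_, ?_⟩
  · rw [Matrix.mul_assoc, hXA, blockCols_mul_blockDiagonal']
    simp only [← Matrix.mul_assoc, fun i => (hX i).1]
  · rw [hXA, blockDiagonal'_mul_blockRows]
    simp only [fun i => (hX i).2.1]
  · rw [blockCols_mul_blockRows, transpose_sum]
    simp only [fun i => (hX i).2.2.1]
  · rw [hXA, blockDiagonal'_transpose]
    simp only [fun i => (hX i).2.2.2]

theorem stmt13 {p μ : ℕ} (r : Fin p → ℕ)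
    (Bi : (i : Fin p) → Matrix (Fin μ) (Fin (r i)) ℝ)
    (B : Matrix (Fin μ) ((i : Fin p) × Fin (r i)) ℝ)
    (hB : B = Matrix.of fun k ic => Bi ic.1 k ic.2)
    (horth : ∀ i j, i ≠ j → (Bi i)ᵀ * Bi j = 0)
    (Bp : Matrix ((i : Fin p) × Fin (r i)) (Fin μ) ℝ) (hBp : IsMP B Bp)
    (Bip : (i : Fin p) → Matrix (Fin (r i)) (Fin μ) ℝ)
    (hBip : ∀ i, IsMP (Bi i) (Bip i)) :
    Bp = Matrix.of fun ic k => Bip ic.1 ic.2 k := by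
  subst hB
  exact hBp.unique (isMP_blockCols_blockRows horth hBip)
end

section
/- Let A : m × n, b ∈ ℝ^m with b ∈ range(A), Γ : m × q, Ā = [A Γ], P = Ā⁺Ā, Y = [0 I_q], W = Y(I−P) = [B S], and f = −Y Ā⁺ b. If x solves A x = b, then the vector (x, 0) ∈ ℝ^{n+q} solves the block system [[A Γ];[B S]] (x,y) = (b, f). -/
/-! Since `Ā (x, 0) = A x = b` and `Y (x, 0) = 0`, expanding `W (x, 0) = Y (x, 0) - Y Ā⁺ (Ā (x, 0))`
gives `-Y Ā⁺ b = f`; the top block is `Ā (x, 0) = b` itself. -/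

open Matrix

section

variable {R ι κ μ : Type*} [Fintype κ] [Fintype μ]

theorem fromCols_mulVec_sumElim_zero [Semiring R] (A : Matrix ι κ R) (B : Matrix ι μ R) (x : κ → R) :
    fromCols A B *ᵥ Sum.elim x 0 = A *ᵥ x := by
  rw [fromCols_mulVec_sumElim, mulVec_zero, add_zero]

theorem mul_one_sub_mul_mulVec_of_mulVec_eq_zero [Ring R] [DecidableEq κ]
    (M : Matrix ι κ R) (X : Matrix κ μ R) (E : Matrix μ κ R) {v : κ → R} {b : μ → R}
    (hEv : E *ᵥ v = b) (hMv : M *ᵥ v = 0) :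
    (M * (1 - X * E)) *ᵥ v = -((M * X) *ᵥ b) := by
  rw [← mulVec_mulVec, sub_mulVec, one_mulVec, ← mulVec_mulVec, hEv, mulVec_sub, hMv,
    zero_sub, mulVec_mulVec]

end

theorem stmt15_general {m n q : ℕ} (A : Matrix (Fin m) (Fin n) ℝ) (G : Matrix (Fin m) (Fin q) ℝ)
    (b : Fin m → ℝ)
    (Abp : Matrix (Fin n ⊕ Fin q) (Fin m) ℝ)
    (W : Matrix (Fin q) (Fin n ⊕ Fin q) ℝ)
    (hW : W = fromCols (0 : Matrix (Fin q) (Fin n) ℝ) 1 * (1 - Abp * fromCols A G))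
    (f : Fin q → ℝ)
    (hf : f = -((fromCols (0 : Matrix (Fin q) (Fin n) ℝ) 1 * Abp).mulVec b))
    (x : Fin n → ℝ) (hx : A.mulVec x = b) :
    (fromRows (fromCols A G) W).mulVec (Sum.elim x 0) = Sum.elim b f := by
  have hAb : fromCols A G *ᵥ Sum.elim x 0 = b := by
    rw [fromCols_mulVec_sumElim_zero, hx]
  have hY :
      fromCols (0 : Matrix (Fin q) (Fin n) ℝ) (1 : Matrix (Fin q) (Fin q) ℝ) *ᵥ Sum.elim x 0 = 0 := by
    rw [fromCols_mulVec_sumElim_zero, zero_mulVec]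
  rw [fromRows_mulVec, hAb, hW, hf]
  -- `exact` rather than `rw`: the products in `hW` elaborate through the `CStarMatrix` instance,
  -- which is only defeq to the `Matrix` one.
  exact congrArg _ (mul_one_sub_mul_mulVec_of_mulVec_eq_zero _ _ _ hAb hY)

theorem stmt15 {m n q : ℕ} (A : Matrix (Fin m) (Fin n) ℝ) (G : Matrix (Fin m) (Fin q) ℝ)
    (b : Fin m → ℝ)
    (Abp : Matrix (Fin n ⊕ Fin q) (Fin m) ℝ) (hAbp : IsMP (fromCols A G) Abp)
    (W : Matrix (Fin q) (Fin n ⊕ Fin q) ℝ)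
    (hW : W = fromCols (0 : Matrix (Fin q) (Fin n) ℝ) 1 * (1 - Abp * fromCols A G))
    (f : Fin q → ℝ)
    (hf : f = -((fromCols (0 : Matrix (Fin q) (Fin n) ℝ) 1 * Abp).mulVec b))
    (x : Fin n → ℝ) (hx : A.mulVec x = b) :
    (fromRows (fromCols A G) W).mulVec (Sum.elim x 0) = Sum.elim b f :=
  stmt15_general A G b Abp W hW f hf x hx
end
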